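/- Fix a prime p, integers n ≥ 1 and 0 ≤ k ≤ n, and a ∈ Z_p. Writing δ^k(a + p^n u) = Σ_{j=0}^{p^k} c^k_{a,j} u^j as a polynomial in u, for every j with 2 ≤ j ≤ p^k the coefficient satisfies |c^k_{a,j}|_p ≤ p^{-((n-k+1)j - 1)}. -/

import Mathlib

/-!
Put `D Q = p⁻¹ (Q - Q ^ p)` on `ℚ_[p][X]`; then `δ^[k] (a + p ^ n u)` is the value at `u` of
`P_k = D^[k] (a + p ^ n X)`, whose coefficients are the `c j`. For the weight
`w_k = p ^ (n - k + 1)`, the non-constant part of `P_k` has weighted Gauss norm at most `p`,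
while `P_k(0) = δ^[k] a` is integral. As `w_k = p w_{k+1}`, `P_k` then lies in the unit ball of
the Gauss norm with weight `w_{k+1}`; that norm is multiplicative and ultrametric, so
`P_k - P_k ^ p` lies in the same ball, and dividing by `p` gives the bound for `P_{k+1}`.
-/

open Polynomial

theorem Polynomial.coeff_eq_of_infinite_eval_eq_sum {R : Type*} [CommRing R] [IsDomain R]
    {P : R[X]} {S : Set R} (hS : S.Infinite) {N : ℕ} {c : ℕ → R}
    (h : ∀ x ∈ S, P.eval x = ∑ j ∈ Finset.range N, c j * x ^ j) {j : ℕ} (hj : j < N) :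
    P.coeff j = c j := by
  have hP : P = ∑ i ∈ Finset.range N, C (c i) * X ^ i :=
    eq_of_infinite_eval_eq _ _ <| hS.mono fun x hx => by simp [h x hx, eval_finsetSum]
  simp [hP, finsetSum_coeff, hj]

theorem Polynomial.gaussNorm_le_iff {R F : Type*} [Semiring R] [FunLike F R ℝ]
    [ZeroHomClass F R ℝ] [NonnegHomClass F R ℝ] (v : F) {c B : ℝ} (hc : 0 ≤ c) (hB : 0 ≤ B)
    (P : R[X]) :
    P.gaussNorm v c ≤ B ↔ ∀ i, v (P.coeff i) * c ^ i ≤ B := by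
  refine ⟨fun h i => (P.le_gaussNorm v hc i).trans h, fun h => ?_⟩
  unfold gaussNorm
  split_ifs with hP
  · exact Finset.sup'_le _ _ fun i _ => h i
  · exact hB

section FermatQuotient

variable {p : ℕ} [Fact p.Prime]

noncomputable def fermatQuotient (y : ℚ_[p]) : ℚ_[p] := (p : ℚ_[p])⁻¹ * (y - y ^ p)

noncomputable def fermatQuotientPoly (Q : ℚ_[p][X]) : ℚ_[p][X] := C (p : ℚ_[p])⁻¹ * (Q - Q ^ p)

theorem semiconj_eval_fermatQuotientPoly (x : ℚ_[p]) :
    Function.Semiconj (eval x) fermatQuotientPoly (fermatQuotient (p := p)) := fun Q => by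
  simp [fermatQuotientPoly, fermatQuotient]

theorem semiconj_coe_fermatQuotient {δ : ℤ_[p] → ℤ_[p]}
    (hδ : ∀ x : ℤ_[p], (p : ℤ_[p]) * δ x = x - x ^ p) :
    Function.Semiconj (fun x : ℤ_[p] => (x : ℚ_[p])) δ fermatQuotient := fun x : ℤ_[p] => by
  have hp : (p : ℚ_[p]) ≠ 0 := Nat.cast_ne_zero.2 (Fact.out : p.Prime).ne_zero
  have h := congrArg ((↑) : ℤ_[p] → ℚ_[p]) (hδ x)
  rw [PadicInt.coe_mul, PadicInt.coe_sub, PadicInt.coe_pow, PadicInt.coe_natCast] at h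
  rw [fermatQuotient, ← h, inv_mul_cancel_left₀ hp]

theorem norm_coeff_fermatQuotientPoly_mul_pow_le {Q : ℚ_[p][X]} {c : ℝ} (hc : 0 < c)
    (h0 : ‖Q.coeff 0‖ ≤ 1) (h : ∀ l, 1 ≤ l → ‖Q.coeff l‖ * (p * c) ^ l ≤ p) (l : ℕ) :
    ‖(fermatQuotientPoly Q).coeff l‖ * c ^ l ≤ p := by
  set v := NormedField.toAbsoluteValue ℚ_[p]
  have hv_apply (x : ℚ_[p]) : v x = ‖x‖ := rfl
  have hv : IsNonarchimedean v := IsUltrametricDist.isNonarchimedean_norm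
  have := gaussNorm_isAbsoluteValue hv hc
  have hp : (1 : ℝ) ≤ p := by exact_mod_cast (Fact.out : p.Prime).one_lt.le
  have hQ : Q.gaussNorm v c ≤ 1 := by
    refine (gaussNorm_le_iff v hc.le zero_le_one Q).2 fun i => ?_
    rw [hv_apply]
    rcases Nat.eq_zero_or_pos i with rfl | hi
    · simpa using h0
    · refine le_of_mul_le_mul_right ?_ (pow_pos (zero_lt_one.trans_le hp) i)
      calc ‖Q.coeff i‖ * c ^ i * p ^ i = ‖Q.coeff i‖ * (p * c) ^ i := by ring
        _ ≤ p := h i hi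
        _ ≤ 1 * p ^ i := by rw [one_mul]; exact le_self_pow₀ hp hi.ne'
  have hQp : (Q - Q ^ p).gaussNorm v c ≤ 1 := by
    rw [sub_eq_add_neg]
    refine (isNonarchimedean_gaussNorm v hv hc.le Q (-Q ^ p)).trans (max_le hQ ?_)
    rw [IsAbsoluteValue.abv_neg (gaussNorm v c), IsAbsoluteValue.abv_pow (gaussNorm v c)]
    exact pow_le_one₀ (gaussNorm_nonneg v _ hc.le) hQ
  have hl := (gaussNorm_le_iff v hc.le zero_le_one _).1 hQp l
  rw [fermatQuotientPoly, coeff_C_mul, norm_mul, norm_inv, Padic.norm_p, inv_inv, mul_assoc]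
  exact mul_le_of_le_one_right (by positivity) hl

theorem norm_coeff_iterate_fermatQuotientPoly_mul_pow_le {P : ℚ_[p][X]} {c : ℝ} (hc : 0 < c)
    (h0 : ∀ k, ‖(fermatQuotientPoly^[k] P).coeff 0‖ ≤ 1)
    (hP : ∀ l, 1 ≤ l → ‖P.coeff l‖ * c ^ l ≤ p) (k : ℕ) :
    ∀ l, 1 ≤ l → ‖(fermatQuotientPoly^[k] P).coeff l‖ * (c / p ^ k) ^ l ≤ p := by
  induction k with
  | zero => simpa using hP
  | succ k ih =>
    have hp : (0 : ℝ) < p := by exact_mod_cast (Fact.out : p.Prime).pos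
    intro l _
    rw [Function.iterate_succ_apply']
    refine norm_coeff_fermatQuotientPoly_mul_pow_le (by positivity) (h0 k) (fun i hi => ?_) l
    convert ih i hi using 3
    field_simp
    ring

theorem eval_iterate_fermatQuotientPoly {δ : ℤ_[p] → ℤ_[p]}
    (hδ : ∀ x : ℤ_[p], (p : ℤ_[p]) * δ x = x - x ^ p) (a : ℤ_[p]) (n k : ℕ) (u : ℤ_[p]) :
    (fermatQuotientPoly^[k] (C (a : ℚ_[p]) + C ((p : ℚ_[p]) ^ n) * X)).eval (u : ℚ_[p]) =
      δ^[k] (a + (p : ℤ_[p]) ^ n * u) := by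
  rw [((semiconj_eval_fermatQuotientPoly _).iterate_right k).eq,
    ((semiconj_coe_fermatQuotient hδ).iterate_right k).eq]
  simp

theorem norm_coeff_zero_iterate_fermatQuotientPoly_le_one {δ : ℤ_[p] → ℤ_[p]}
    (hδ : ∀ x : ℤ_[p], (p : ℤ_[p]) * δ x = x - x ^ p) (a : ℤ_[p]) (n k : ℕ) :
    ‖(fermatQuotientPoly^[k] (C (a : ℚ_[p]) + C ((p : ℚ_[p]) ^ n) * X)).coeff 0‖ ≤ 1 := by
  rw [coeff_zero_eq_eval_zero, ← PadicInt.coe_zero, eval_iterate_fermatQuotientPoly hδ,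
    PadicInt.padic_norm_e_of_padicInt]
  exact PadicInt.norm_le_one _

theorem norm_coeff_linear_mul_pow_le (a : ℤ_[p]) (n l : ℕ) (hl : 1 ≤ l) :
    ‖(C (a : ℚ_[p]) + C ((p : ℚ_[p]) ^ n) * X).coeff l‖ * ((p : ℝ) ^ (n + 1)) ^ l ≤ p := by
  rw [coeff_add, coeff_C_mul, coeff_C, if_neg (by omega), zero_add, coeff_X]
  rcases hl.eq_or_lt with rfl | hl
  · rw [if_pos rfl, mul_one, norm_pow, Padic.norm_p, pow_one, pow_succ, ← mul_assoc,
      ← mul_pow, inv_mul_cancel₀ (by exact_mod_cast (Fact.out : p.Prime).ne_zero), one_pow,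
      one_mul]
  · rw [if_neg hl.ne, mul_zero, norm_zero, zero_mul]
    exact_mod_cast (Fact.out : p.Prime).pos.le

end FermatQuotient

theorem fermat_iterate_higher_coeffs_general (p : ℕ) [Fact p.Prime]
    (δ : ℤ_[p] → ℤ_[p]) (hδ : ∀ x : ℤ_[p], (p : ℤ_[p]) * δ x = x - x ^ p)
    (n k : ℕ) (a : ℤ_[p]) (c : ℕ → ℚ_[p])
    (hc : ∀ u : ℤ_[p],
      ((δ^[k] (a + (p : ℤ_[p]) ^ n * u) : ℤ_[p]) : ℚ_[p]) =
        ∑ j ∈ Finset.range (p ^ k + 1), c j * (u : ℚ_[p]) ^ j) :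
    ∀ j : ℕ, 2 ≤ j → j ≤ p ^ k →
      ‖c j‖ ≤ (p : ℝ) ^ (-(((n : ℤ) - (k : ℤ) + 1) * (j : ℤ) - 1)) := by
  intro j hj2 hjk
  set P := fermatQuotientPoly^[k] (C (a : ℚ_[p]) + C ((p : ℚ_[p]) ^ n) * X)
  have hcj : P.coeff j = c j :=
    coeff_eq_of_infinite_eval_eq_sum
      (Set.infinite_range_of_injective fun _ _ => PadicInt.ext)
      (by rintro _ ⟨u, rfl⟩; rw [eval_iterate_fermatQuotientPoly hδ, hc u]) (by omega)
  have hp : (0 : ℝ) < p := by exact_mod_cast (Fact.out : p.Prime).pos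
  have hbound := norm_coeff_iterate_fermatQuotientPoly_mul_pow_le (pow_pos hp (n + 1))
    (norm_coeff_zero_iterate_fermatQuotientPoly_le_one hδ a n)
    (norm_coeff_linear_mul_pow_le a n) k j (by omega)
  have hweight : ((p : ℝ) ^ (n + 1) / (p : ℝ) ^ k) ^ j =
      (p : ℝ) ^ (((n : ℤ) - k + 1) * j) := by
    rw [zpow_mul, zpow_natCast, ← zpow_natCast (p : ℝ) (n + 1), ← zpow_natCast (p : ℝ) k,
      ← zpow_sub₀ hp.ne']
    push_cast; ring_nf
  rw [← hcj, neg_sub, zpow_sub₀ hp.ne', zpow_one, le_div_iff₀ (by positivity), ← hweight]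
  exact hbound

/-- Writing `δ^k(a + p^n u) = Σ_{j=0}^{p^k} c_j u^j` as a polynomial in `u`
(with coefficients in `ℚ_[p]`), for `2 ≤ j ≤ p^k` the coefficient satisfies
`‖c j‖ ≤ p^(-((n-k+1)j - 1))`. -/
theorem fermat_iterate_higher_coeffs (p : ℕ) [Fact p.Prime]
    (δ : ℤ_[p] → ℤ_[p]) (hδ : ∀ x : ℤ_[p], (p : ℤ_[p]) * δ x = x - x ^ p)
    (n k : ℕ) (hn : 1 ≤ n) (hk : k ≤ n) (a : ℤ_[p]) (c : ℕ → ℚ_[p])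
    (hc : ∀ u : ℤ_[p],
      ((δ^[k] (a + (p : ℤ_[p]) ^ n * u) : ℤ_[p]) : ℚ_[p]) =
        ∑ j ∈ Finset.range (p ^ k + 1), c j * (u : ℚ_[p]) ^ j) :
    ∀ j : ℕ, 2 ≤ j → j ≤ p ^ k →
      ‖c j‖ ≤ (p : ℝ) ^ (-(((n : ℤ) - (k : ℤ) + 1) * (j : ℤ) - 1)) :=
  fermat_iterate_higher_coeffs_general p δ hδ n k a c hc
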